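/- arXiv:2406.09163 — 8 statements merged into one kernel-verified Lean document; each statement's English description precedes it below -/
import Mathlib

section
/- Let p, N ≥ 1, let z_1, …, z_N ∈ ℝ^p be the (partly unobserved) true control covariates, z*_1, …, z*_N ∈ ℝ^p their error-prone measurements, z̄ ∈ ℝ^p the true treated covariate mean, and z̄* ∈ ℝ^p the measured treated covariate mean. Let S ⊆ {1,…,p} be a set of error-free coordinates, i.e. z*_{i,j} = z_{i,j} for all i and all j ∈ S, and z̄*_j = z̄_j for all j ∈ S. If θ̂* is a local minimum of the naive dual objective L*(θ) = log(Σ_{i=1}^N exp⟨θ, z*_i⟩) − ⟨θ, z̄*⟩, then the naive entropy balancing weights ŵ*_i = exp⟨θ̂*, z*_i⟩ / Σ_{j=1}^N exp⟨θ̂*, z*_j⟩ exactly balance the true covariates in every error-free coordinate: Σ_{i=1}^N ŵ*_i z_{i,j} = z̄_j for all j ∈ S. -/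
/-!
The naive dual objective is a log-sum-exp minus a linear function, whose gradient at `θ` is the
softmax-weighted mean of the measurements minus `z̄*`. At a local minimum this gradient vanishes,
so the naive weights balance the measurements `z*` exactly; in an error-free coordinate the
measurements and the treated mean coincide with the true values.
-/

open scoped RealInnerProductSpace
open Real

section SoftmaxBalance

variable {ι E : Type*} [Fintype ι] [NormedAddCommGroup E] [InnerProductSpace ℝ E]

noncomputable def softmaxWeight (z : ι → E) (θ : E) (i : ι) : ℝ :=
  exp ⟪θ, z i⟫ / ∑ j, exp ⟪θ, z j⟫

theorem hasFDerivAt_inner_const (z θ : E) :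
    HasFDerivAt (fun θ : E => ⟪θ, z⟫) (innerSL ℝ z) θ := by
  convert (innerSL ℝ z).hasFDerivAt using 1
  ext θ
  exact real_inner_comm z θ

theorem hasFDerivAt_logSumExp [Nonempty ι] (z : ι → E) (θ : E) :
    HasFDerivAt (fun θ => log (∑ i, exp ⟪θ, z i⟫))
      (innerSL ℝ (∑ i, softmaxWeight z θ i • z i)) θ := by
  have hpos : 0 < ∑ i, exp ⟪θ, z i⟫ :=
    Finset.sum_pos (fun i _ => exp_pos _) Finset.univ_nonempty
  have hsum := HasFDerivAt.fun_sum (u := Finset.univ) fun i _ =>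
    (hasFDerivAt_inner_const (z i) θ).exp
  convert hsum.log hpos.ne' using 1
  simp only [map_sum, map_smul, softmaxWeight, div_eq_inv_mul, mul_smul, Finset.smul_sum]

theorem softmax_mean_eq_of_isLocalMin [Nonempty ι] {z : ι → E} {zbar θ : E}
    (hmin : IsLocalMin (fun θ => log (∑ i, exp ⟪θ, z i⟫) - ⟪θ, zbar⟫) θ) :
    ∑ i, softmaxWeight z θ i • z i = zbar := by
  have hderiv := hmin.hasFDerivAt_eq_zero
    ((hasFDerivAt_logSumExp z θ).sub (hasFDerivAt_inner_const zbar θ))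
  exact innerSL_inj.mp (sub_eq_zero.mp hderiv)

end SoftmaxBalance

theorem naive_eb_balances_error_free_coordinates_general
    (p N : ℕ) (hN : 1 ≤ N)
    (z zstar : Fin N → EuclideanSpace ℝ (Fin p))
    (zbar zbarstar : EuclideanSpace ℝ (Fin p))
    (S : Set (Fin p))
    (hfree : ∀ i, ∀ j ∈ S, zstar i j = z i j)
    (hfreebar : ∀ j ∈ S, zbarstar j = zbar j)
    (θhat : EuclideanSpace ℝ (Fin p))
    (hmin : IsLocalMin
      (fun θ : EuclideanSpace ℝ (Fin p) =>
        Real.log (∑ i, Real.exp ⟪θ, zstar i⟫) - ⟪θ, zbarstar⟫) θhat)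
    (w : Fin N → ℝ)
    (hw : ∀ i, w i = Real.exp ⟪θhat, zstar i⟫ / ∑ j, Real.exp ⟪θhat, zstar j⟫) :
    ∀ j ∈ S, ∑ i, w i * z i j = zbar j := by
  intro j hj
  have : Nonempty (Fin N) := Fin.pos_iff_nonempty.mp hN
  have hweights : w = softmaxWeight zstar θhat := funext hw
  have hbalance := congrArg (· j) (softmax_mean_eq_of_isLocalMin hmin)
  simp only [WithLp.ofLp_sum, WithLp.ofLp_smul, Finset.sum_apply, Pi.smul_apply,
    smul_eq_mul] at hbalance
  rw [← hfreebar j hj, ← hbalance, hweights]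
  exact Finset.sum_congr rfl fun i _ => by rw [hfree i j hj]

/-- If `θ̂*` is a local minimum of the naive EB dual objective computed on the
error-prone measurements `z*` and the measured treated mean `z̄*`, then the naive EB weights
exactly balance the true covariates in every error-free coordinate `j ∈ S`. -/
theorem naive_eb_balances_error_free_coordinates
    (p N : ℕ) (hp : 1 ≤ p) (hN : 1 ≤ N)
    (z zstar : Fin N → EuclideanSpace ℝ (Fin p))
    (zbar zbarstar : EuclideanSpace ℝ (Fin p))
    (S : Set (Fin p))
    (hfree : ∀ i, ∀ j ∈ S, zstar i j = z i j)
    (hfreebar : ∀ j ∈ S, zbarstar j = zbar j)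
    (θhat : EuclideanSpace ℝ (Fin p))
    (hmin : IsLocalMin
      (fun θ : EuclideanSpace ℝ (Fin p) =>
        Real.log (∑ i, Real.exp ⟪θ, zstar i⟫) - ⟪θ, zbarstar⟫) θhat)
    (w : Fin N → ℝ)
    (hw : ∀ i, w i = Real.exp ⟪θhat, zstar i⟫ / ∑ j, Real.exp ⟪θhat, zstar j⟫) :
    ∀ j ∈ S, ∑ i, w i * z i j = zbar j :=
  naive_eb_balances_error_free_coordinates_general p N hN z zstar zbar zbarstar S hfree hfreebar
    θhat hmin w hw
end

section
/- Let (Ω, μ) be a probability space, let Z, ε : Ω → ℝ^p be independent random vectors, and fix θ ∈ ℝ^p. Assume that exp⟨θ,Z⟩, Z_j·exp⟨θ,Z⟩, exp⟨θ,ε⟩, and ε_j·exp⟨θ,ε⟩ are integrable for every coordinate j, that E[exp⟨θ,Z⟩] > 0, and set M := E[exp⟨θ,ε⟩] > 0. Let Z* = Z + ε. Then E[exp⟨θ,Z*⟩] = M · E[exp⟨θ,Z⟩] > 0, and for every coordinate j: E[Z*_j exp⟨θ,Z*⟩]/E[exp⟨θ,Z*⟩] − E[Z_j exp⟨θ,Z⟩]/E[exp⟨θ,Z⟩]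 = E[ε_j exp⟨θ,ε⟩]/M. In particular, if ε_j = 0 almost surely, the j-th population imbalance on the left-hand side is zero. -/
/-!
Since `exp ⟪θ, Z + ε⟫ = exp ⟪θ, Z⟫ * exp ⟪θ, ε⟫`, independence factorises the normaliser
`E[exp ⟪θ, Z*⟫] = E[exp ⟪θ, Z⟫] * M`, and the product rule splits the numerator
`E[L Z* exp ⟪θ, Z*⟫]` into two terms that factorise in the same way. Hence tilted means (gradients
of the log-MGF) add over independent sums, and the imbalance is the tilted mean of `ε`.
-/

open scoped RealInnerProductSpace
open MeasureTheory ProbabilityTheory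

namespace ProbabilityTheory

variable {Ω E : Type*} [MeasurableSpace Ω] {μ : Measure Ω}
  [NormedAddCommGroup E] [InnerProductSpace ℝ E] [MeasurableSpace E] [OpensMeasurableSpace E]
  {X Y : Ω → E} {θ : E}

noncomputable def tiltedMean (μ : Measure Ω) (θ : E) (L : E →L[ℝ] ℝ) (X : Ω → E) : ℝ :=
  (∫ ω, L (X ω) * Real.exp ⟪θ, X ω⟫ ∂μ) / ∫ ω, Real.exp ⟪θ, X ω⟫ ∂μ

lemma IndepFun.integral_exp_inner_add (hXY : X ⟂ᵢ[μ] Y)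
    (hX : AEStronglyMeasurable (fun ω => Real.exp ⟪θ, X ω⟫) μ)
    (hY : AEStronglyMeasurable (fun ω => Real.exp ⟪θ, Y ω⟫) μ) :
    ∫ ω, Real.exp ⟪θ, X ω + Y ω⟫ ∂μ
      = (∫ ω, Real.exp ⟪θ, X ω⟫ ∂μ) * ∫ ω, Real.exp ⟪θ, Y ω⟫ ∂μ := by
  simp_rw [inner_add_right, Real.exp_add]
  exact (hXY.comp (φ := fun x => Real.exp ⟪θ, x⟫) (ψ := fun y => Real.exp ⟪θ, y⟫) (by fun_prop)
    (by fun_prop)).integral_fun_mul_eq_mul_integral hX hY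

lemma IndepFun.integral_mul_exp_inner_add (hXY : X ⟂ᵢ[μ] Y) (L : E →L[ℝ] ℝ)
    (hX : Integrable (fun ω => Real.exp ⟪θ, X ω⟫) μ)
    (hLX : Integrable (fun ω => L (X ω) * Real.exp ⟪θ, X ω⟫) μ)
    (hY : Integrable (fun ω => Real.exp ⟪θ, Y ω⟫) μ)
    (hLY : Integrable (fun ω => L (Y ω) * Real.exp ⟪θ, Y ω⟫) μ) :
    ∫ ω, L (X ω + Y ω) * Real.exp ⟪θ, X ω + Y ω⟫ ∂μ
      = (∫ ω, L (X ω) * Real.exp ⟪θ, X ω⟫ ∂μ) * (∫ ω, Real.exp ⟪θ, Y ω⟫ ∂μ)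
        + (∫ ω, Real.exp ⟪θ, X ω⟫ ∂μ) * ∫ ω, L (Y ω) * Real.exp ⟪θ, Y ω⟫ ∂μ := by
  have hLXY : (fun ω => L (X ω) * Real.exp ⟪θ, X ω⟫) ⟂ᵢ[μ] fun ω => Real.exp ⟪θ, Y ω⟫ :=
    hXY.comp (φ := fun x => L x * Real.exp ⟪θ, x⟫) (ψ := fun y => Real.exp ⟪θ, y⟫)
      (by fun_prop) (by fun_prop)
  have hXLY : (fun ω => Real.exp ⟪θ, X ω⟫) ⟂ᵢ[μ] fun ω => L (Y ω) * Real.exp ⟪θ, Y ω⟫ :=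
    hXY.comp (φ := fun x => Real.exp ⟪θ, x⟫) (ψ := fun y => L y * Real.exp ⟪θ, y⟫)
      (by fun_prop) (by fun_prop)
  have hsplit : ∀ ω, L (X ω + Y ω) * Real.exp ⟪θ, X ω + Y ω⟫
      = L (X ω) * Real.exp ⟪θ, X ω⟫ * Real.exp ⟪θ, Y ω⟫
        + Real.exp ⟪θ, X ω⟫ * (L (Y ω) * Real.exp ⟪θ, Y ω⟫) := fun ω => by
    rw [map_add, inner_add_right, Real.exp_add]
    ring
  have hint_left : Integrable
      (fun ω => L (X ω) * Real.exp ⟪θ, X ω⟫ * Real.exp ⟪θ, Y ω⟫) μ := hLXY.integrable_mul hLX hY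
  have hint_right : Integrable
      (fun ω => Real.exp ⟪θ, X ω⟫ * (L (Y ω) * Real.exp ⟪θ, Y ω⟫)) μ := hXLY.integrable_mul hX hLY
  simp_rw [hsplit]
  rw [integral_add hint_left hint_right,
    hLXY.integral_fun_mul_eq_mul_integral hLX.1 hY.1,
    hXLY.integral_fun_mul_eq_mul_integral hX.1 hLY.1]

lemma IndepFun.tiltedMean_add (hXY : X ⟂ᵢ[μ] Y) (L : E →L[ℝ] ℝ)
    (hX : Integrable (fun ω => Real.exp ⟪θ, X ω⟫) μ)
    (hLX : Integrable (fun ω => L (X ω) * Real.exp ⟪θ, X ω⟫) μ)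
    (hY : Integrable (fun ω => Real.exp ⟪θ, Y ω⟫) μ)
    (hLY : Integrable (fun ω => L (Y ω) * Real.exp ⟪θ, Y ω⟫) μ)
    (hX_pos : 0 < ∫ ω, Real.exp ⟪θ, X ω⟫ ∂μ) (hY_pos : 0 < ∫ ω, Real.exp ⟪θ, Y ω⟫ ∂μ) :
    tiltedMean μ θ L (fun ω => X ω + Y ω) = tiltedMean μ θ L X + tiltedMean μ θ L Y := by
  unfold tiltedMean
  rw [hXY.integral_mul_exp_inner_add L hX hLX hY hLY, hXY.integral_exp_inner_add hX.1 hY.1]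
  field_simp

end ProbabilityTheory

theorem naive_tilted_mean_imbalance_general
    {Ω : Type*} [MeasurableSpace Ω] (μ : Measure Ω)
    (p : ℕ) (Z ε : Ω → EuclideanSpace ℝ (Fin p)) (θ : EuclideanSpace ℝ (Fin p))
    (hindep : ProbabilityTheory.IndepFun Z ε μ)
    (hint1 : Integrable (fun ω => Real.exp ⟪θ, Z ω⟫) μ)
    (hint2 : ∀ j, Integrable (fun ω => Z ω j * Real.exp ⟪θ, Z ω⟫) μ)
    (hint3 : Integrable (fun ω => Real.exp ⟪θ, ε ω⟫) μ)
    (hint4 : ∀ j, Integrable (fun ω => ε ω j * Real.exp ⟪θ, ε ω⟫) μ)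
    (hpos : 0 < ∫ ω, Real.exp ⟪θ, Z ω⟫ ∂μ)
    (M : ℝ) (hM : M = ∫ ω, Real.exp ⟪θ, ε ω⟫ ∂μ) (hMpos : 0 < M)
    (Zstar : Ω → EuclideanSpace ℝ (Fin p)) (hZstar : ∀ ω, Zstar ω = Z ω + ε ω) :
    (∫ ω, Real.exp ⟪θ, Zstar ω⟫ ∂μ = M * ∫ ω, Real.exp ⟪θ, Z ω⟫ ∂μ) ∧
    (0 < ∫ ω, Real.exp ⟪θ, Zstar ω⟫ ∂μ) ∧
    (∀ j, (∫ ω, Zstar ω j * Real.exp ⟪θ, Zstar ω⟫ ∂μ) / (∫ ω, Real.exp ⟪θ, Zstar ω⟫ ∂μ)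
        - (∫ ω, Z ω j * Real.exp ⟪θ, Z ω⟫ ∂μ) / (∫ ω, Real.exp ⟪θ, Z ω⟫ ∂μ)
        = (∫ ω, ε ω j * Real.exp ⟪θ, ε ω⟫ ∂μ) / M) ∧
    (∀ j, (∀ᵐ ω ∂μ, ε ω j = 0) →
      (∫ ω, Zstar ω j * Real.exp ⟪θ, Zstar ω⟫ ∂μ) / (∫ ω, Real.exp ⟪θ, Zstar ω⟫ ∂μ)
        - (∫ ω, Z ω j * Real.exp ⟪θ, Z ω⟫ ∂μ) / (∫ ω, Real.exp ⟪θ, Z ω⟫ ∂μ) = 0) := by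
  simp only [hZstar]
  subst hM
  have hmgf := hindep.integral_exp_inner_add hint1.1 hint3.1
  have himbalance : ∀ j, tiltedMean μ θ (EuclideanSpace.proj j) (fun ω => Z ω + ε ω)
      - tiltedMean μ θ (EuclideanSpace.proj j) Z = tiltedMean μ θ (EuclideanSpace.proj j) ε :=
    fun j => by
      rw [hindep.tiltedMean_add _ hint1 (hint2 j) hint3 (hint4 j) hpos hMpos, add_sub_cancel_left]
  refine ⟨by rw [hmgf, mul_comm], hmgf ▸ mul_pos hpos hMpos, himbalance, fun j hj => ?_⟩
  have hzero : tiltedMean μ θ (EuclideanSpace.proj j) ε = 0 := by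
    rw [tiltedMean, integral_eq_zero_of_ae (hj.mono fun ω h => by simp [h]), zero_div]
  exact (himbalance j).trans hzero

/-- Under the additive measurement error model `Z* = Z + ε` with `Z ⟂ ε`,
the tilted mean of `Z*` factorizes, and the population imbalance of the true covariate in
coordinate `j` equals `E[ε_j exp⟪θ,ε⟫]/M` where `M = E[exp⟪θ,ε⟫]`; in particular it vanishes
in coordinates where the error is zero almost surely. -/
theorem naive_tilted_mean_imbalance
    {Ω : Type*} [MeasurableSpace Ω] (μ : Measure Ω) [IsProbabilityMeasure μ]
    (p : ℕ) (Z ε : Ω → EuclideanSpace ℝ (Fin p)) (θ : EuclideanSpace ℝ (Fin p))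
    (hZ : Measurable Z) (hε : Measurable ε)
    (hindep : ProbabilityTheory.IndepFun Z ε μ)
    (hint1 : Integrable (fun ω => Real.exp ⟪θ, Z ω⟫) μ)
    (hint2 : ∀ j, Integrable (fun ω => Z ω j * Real.exp ⟪θ, Z ω⟫) μ)
    (hint3 : Integrable (fun ω => Real.exp ⟪θ, ε ω⟫) μ)
    (hint4 : ∀ j, Integrable (fun ω => ε ω j * Real.exp ⟪θ, ε ω⟫) μ)
    (hpos : 0 < ∫ ω, Real.exp ⟪θ, Z ω⟫ ∂μ)
    (M : ℝ) (hM : M = ∫ ω, Real.exp ⟪θ, ε ω⟫ ∂μ) (hMpos : 0 < M)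
    (Zstar : Ω → EuclideanSpace ℝ (Fin p)) (hZstar : ∀ ω, Zstar ω = Z ω + ε ω) :
    (∫ ω, Real.exp ⟪θ, Zstar ω⟫ ∂μ = M * ∫ ω, Real.exp ⟪θ, Z ω⟫ ∂μ) ∧
    (0 < ∫ ω, Real.exp ⟪θ, Zstar ω⟫ ∂μ) ∧
    (∀ j, (∫ ω, Zstar ω j * Real.exp ⟪θ, Zstar ω⟫ ∂μ) / (∫ ω, Real.exp ⟪θ, Zstar ω⟫ ∂μ)
        - (∫ ω, Z ω j * Real.exp ⟪θ, Z ω⟫ ∂μ) / (∫ ω, Real.exp ⟪θ, Z ω⟫ ∂μ)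
        = (∫ ω, ε ω j * Real.exp ⟪θ, ε ω⟫ ∂μ) / M) ∧
    (∀ j, (∀ᵐ ω ∂μ, ε ω j = 0) →
      (∫ ω, Zstar ω j * Real.exp ⟪θ, Zstar ω⟫ ∂μ) / (∫ ω, Real.exp ⟪θ, Zstar ω⟫ ∂μ)
        - (∫ ω, Z ω j * Real.exp ⟪θ, Z ω⟫ ∂μ) / (∫ ω, Real.exp ⟪θ, Z ω⟫ ∂μ) = 0) :=
  naive_tilted_mean_imbalance_general μ p Z ε θ hindep hint1 hint2 hint3 hint4 hpos M hM hMpos Zstar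
    hZstar
end

section
/- Let p = p_1 + p_2 with p_1, p_2 ≥ 1. Let Σ_1 be a real p_1×p_1 matrix and let Σ be the p×p block-diagonal matrix Σ = diag(Σ_1, 0_{p_2×p_2}). Let H be an invertible real p×p matrix with inverse written in blocks H^{-1} = [[H^I_{11}, H^I_{12}], [H^I_{21}, H^I_{22}]] where H^I_{11} is p_1×p_1 and H^I_{22} is p_2×p_2, and assume I_{p_1} + H^I_{11}Σ_1 is invertible. Write θ_0 = (θ_{0,x}, θ_{0,u}) and θ* = (θ*_x, θ*_u) with x-components in ℝ^{p_1} and u-components in ℝ^{p_2}. If H(θ* − θ_0) = −Σθ*, then θ*_x = (I_{p_1} + H^I_{11}Σ_1)^{-1} θ_{0,x} and θ*_u = θ_{0,u} − H^I_{21} Σ_1 (I_{p_1} + H^I_{11}Σ_1)^{-1} θ_{0,x}. -/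
/-- Block form of the bias formula. With `Σ = diag(Σ₁, 0)`, `H` invertible with
inverse blocks `H^I_{11}, H^I_{12}, H^I_{21}, H^I_{22}`, `I + H^I_{11} Σ₁` invertible, and
`H (θ* - θ0) = -Σ θ*`, the components satisfy
`θ*_x = (I + H^I_{11} Σ₁)⁻¹ θ_{0,x}` and
`θ*_u = θ_{0,u} - H^I_{21} Σ₁ (I + H^I_{11} Σ₁)⁻¹ θ_{0,x}`. -/
theorem naive_eb_bias_formula_block
    (p1 p2 : ℕ) (hp1 : 1 ≤ p1) (hp2 : 1 ≤ p2)
    (S1 : Matrix (Fin p1) (Fin p1) ℝ)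
    (S : Matrix (Fin p1 ⊕ Fin p2) (Fin p1 ⊕ Fin p2) ℝ)
    (hS : S = Matrix.fromBlocks S1 0 0 0)
    (H : Matrix (Fin p1 ⊕ Fin p2) (Fin p1 ⊕ Fin p2) ℝ) (hH : IsUnit H)
    (H11 : Matrix (Fin p1) (Fin p1) ℝ) (H12 : Matrix (Fin p1) (Fin p2) ℝ)
    (H21 : Matrix (Fin p2) (Fin p1) ℝ) (H22 : Matrix (Fin p2) (Fin p2) ℝ)
    (hblocks : H⁻¹ = Matrix.fromBlocks H11 H12 H21 H22)
    (hinv : IsUnit (1 + H11 * S1))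
    (θ0 θs : Fin p1 ⊕ Fin p2 → ℝ)
    (θ0x θsx : Fin p1 → ℝ) (θ0u θsu : Fin p2 → ℝ)
    (h0x : θ0x = θ0 ∘ Sum.inl) (h0u : θ0u = θ0 ∘ Sum.inr)
    (hsx : θsx = θs ∘ Sum.inl) (hsu : θsu = θs ∘ Sum.inr)
    (h : H.mulVec (θs - θ0) = -(S.mulVec θs)) :
    θsx = (1 + H11 * S1)⁻¹.mulVec θ0x ∧
    θsu = θ0u - (H21 * S1 * (1 + H11 * S1)⁻¹).mulVec θ0x := by
  have hdet : IsUnit H.det := (Matrix.isUnit_iff_isUnit_det H).mp hH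
  have hA : IsUnit (1 + H11 * S1).det := (Matrix.isUnit_iff_isUnit_det _).mp hinv
  have key : θs - θ0 = -((H⁻¹ * S).mulVec θs) := by
    have h2 := congrArg (H⁻¹.mulVec) h
    rwa [Matrix.mulVec_mulVec, Matrix.nonsing_inv_mul H hdet, Matrix.one_mulVec,
      Matrix.mulVec_neg, Matrix.mulVec_mulVec] at h2
  have hHS : H⁻¹ * S = Matrix.fromBlocks (H11 * S1) 0 (H21 * S1) 0 := by
    rw [hblocks, hS, Matrix.fromBlocks_multiply]; simp
  rw [hHS, Matrix.fromBlocks_mulVec] at key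
  have hx : θsx - θ0x = -((H11 * S1).mulVec θsx) := by
    funext i
    have h3 := congrFun key (Sum.inl i)
    simpa [hsx, h0x] using h3
  have hu : θsu - θ0u = -((H21 * S1).mulVec θsx) := by
    funext i
    have h3 := congrFun key (Sum.inr i)
    simpa [hsx, hsu, h0u] using h3
  have hAx : (1 + H11 * S1).mulVec θsx = θ0x := by
    funext i
    have h4 := congrFun hx i
    simp [Matrix.add_mulVec, Matrix.one_mulVec] at h4 ⊢
    linarith
  have hxfinal : θsx = (1 + H11 * S1)⁻¹.mulVec θ0x := by
    rw [← hAx, Matrix.mulVec_mulVec, Matrix.nonsing_inv_mul _ hA, Matrix.one_mulVec]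
  refine ⟨hxfinal, ?_⟩
  have h5 : θsu = θ0u - (H21 * S1).mulVec θsx := by
    funext i
    have h6 := congrFun hu i
    simp at h6 ⊢
    linarith
  rw [h5, hxfinal, Matrix.mulVec_mulVec]
end

section
/- Let E be a real normed vector space, and let H and S be continuous linear equivalences of E (invertible continuous linear maps with continuous inverses). Suppose the map I + H∘S is also a continuous linear equivalence of E. Let v ∈ E with v ≠ 0 and put w = (I + H∘S)^{-1} v. Then ‖w − v‖ ≥ ‖v‖ / (‖H^{-1}‖·‖S^{-1}‖ + 1), where ‖·‖ denotes the operator norm for linear maps. -/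
/-- If `H`, `S` are continuous linear equivalences of `E`, `T = I + H ∘ S` is also
a continuous linear equivalence, `v ≠ 0`, and `w = T⁻¹ v`, then
`‖w - v‖ ≥ ‖v‖ / (‖H⁻¹‖ ‖S⁻¹‖ + 1)` (relative-bias lower bound). -/
theorem relative_bias_lower_bound
    {E : Type*} [NormedAddCommGroup E] [NormedSpace ℝ E]
    (H S T : E ≃L[ℝ] E)
    (hT : (T : E →L[ℝ] E)
        = ContinuousLinearMap.id ℝ E + (H : E →L[ℝ] E).comp (S : E →L[ℝ] E))
    (v : E) (hv : v ≠ 0) (w : E) (hw : w = T.symm v) :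
    ‖v‖ / (‖(H.symm : E →L[ℝ] E)‖ * ‖(S.symm : E →L[ℝ] E)‖ + 1) ≤ ‖w - v‖ := by
  have hTw : T w = v := by rw [hw]; exact T.apply_symm_apply v
  have h1 : w + H (S w) = v := by
    have := congrArg (fun f : E →L[ℝ] E => f w) hT
    simpa using this.symm.trans hTw
  have hHS : H (S w) = v - w := by rw [← h1]; abel
  have hSw : S w = H.symm (v - w) := by rw [← hHS]; simp
  have hwEq : w = S.symm (H.symm (v - w)) := by rw [← hSw]; simp
  have hbound : ‖w‖ ≤ ‖(H.symm : E →L[ℝ] E)‖ * ‖(S.symm : E →L[ℝ] E)‖ * ‖v - w‖ := by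
    have h2 : ‖w‖ = ‖(S.symm : E →L[ℝ] E) ((H.symm : E →L[ℝ] E) (v - w))‖ := by
      conv_lhs => rw [hwEq]
      rfl
    rw [h2]
    calc ‖(S.symm : E →L[ℝ] E) ((H.symm : E →L[ℝ] E) (v - w))‖
        ≤ ‖(S.symm : E →L[ℝ] E)‖ * ‖(H.symm : E →L[ℝ] E) (v - w)‖ :=
          (S.symm : E →L[ℝ] E).le_opNorm _
      _ ≤ ‖(S.symm : E →L[ℝ] E)‖ * (‖(H.symm : E →L[ℝ] E)‖ * ‖v - w‖) := by
          gcongr; exact (H.symm : E →L[ℝ] E).le_opNorm _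
      _ = ‖(H.symm : E →L[ℝ] E)‖ * ‖(S.symm : E →L[ℝ] E)‖ * ‖v - w‖ := by ring
  have hv' : ‖v‖ ≤ (‖(H.symm : E →L[ℝ] E)‖ * ‖(S.symm : E →L[ℝ] E)‖ + 1) * ‖w - v‖ := by
    have : ‖v‖ ≤ ‖w‖ + ‖v - w‖ := by
      calc ‖v‖ = ‖w + (v - w)‖ := by congr 1; abel
      _ ≤ ‖w‖ + ‖v - w‖ := norm_add_le _ _
    have hsym : ‖v - w‖ = ‖w - v‖ := norm_sub_rev _ _
    rw [hsym] at hbound this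
    nlinarith [this, hbound]
  have hpos : (0 : ℝ) < ‖(H.symm : E →L[ℝ] E)‖ * ‖(S.symm : E →L[ℝ] E)‖ + 1 := by
    positivity
  rw [div_le_iff₀ hpos]
  linarith [hv']
end

section
/- Let p = p_1 + p_2 with p_1, p_2 ≥ 1, let z*_1, …, z*_N ∈ ℝ^p and z̄* ∈ ℝ^p, and let h : ℝ^p → ℝ be a differentiable function that depends only on the first p_1 coordinates of its argument (i.e. h(θ) = h(θ') whenever θ and θ' agree in coordinates 1, …, p_1). If θ̂_c is a local minimum of the corrected entropy balancing objective G(θ) = log(Σ_{i=1}^N exp⟨θ, z*_i⟩) − ⟨θ, z̄*⟩ − h(θ) on ℝ^p, then the corrected EB weights ŵ_{c,i} = exp⟨θ̂_c, z*_i⟩ / Σ_{j=1}^N exp⟨θ̂_c, z*_j⟩ exactly balance the last p_2 coordinates: Σ_{i=1}^N ŵ_{c,i} z*_{i,j} = z̄*_j for every j with p_1 < j ≤ p. -/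
/-!
Moving `θ` along the `j`-th basis vector with `j ≥ p₁` does not change `h`, so at `θ̂_c` the
directional derivative of the corrected objective in that direction equals that of the plain
entropy balancing objective: the softmax-weighted mean of the `z*_{i,j}` minus `z̄*_j`.
Fermat's theorem makes it vanish.
-/

open scoped RealInnerProductSpace

theorem HasLineDerivAt.sub {𝕜 E F : Type*} [NontriviallyNormedField 𝕜]
    [NormedAddCommGroup E] [NormedSpace 𝕜 E] [NormedAddCommGroup F] [NormedSpace 𝕜 F]
    {f g : E → F} {f' g' : F} {x v : E}
    (hf : HasLineDerivAt 𝕜 f f' x v) (hg : HasLineDerivAt 𝕜 g g' x v) :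
    HasLineDerivAt 𝕜 (fun y => f y - g y) (f' - g') x v :=
  HasDerivAt.sub hf hg

theorem hasLineDerivAt_zero_of_forall_add_smul_eq {𝕜 E F : Type*} [NontriviallyNormedField 𝕜]
    [NormedAddCommGroup E] [NormedSpace 𝕜 E] [NormedAddCommGroup F] [NormedSpace 𝕜 F]
    {f : E → F} {x v : E} (hf : ∀ t : 𝕜, f (x + t • v) = f x) :
    HasLineDerivAt 𝕜 f 0 x v := by
  simpa [HasLineDerivAt, hf] using hasDerivAt_const (0 : 𝕜) (f x)

section InnerProductSpace

variable {E : Type*} [NormedAddCommGroup E] [InnerProductSpace ℝ E]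

theorem hasDerivAt_inner_add_smul_left (x v y : E) (t₀ : ℝ) :
    HasDerivAt (fun t : ℝ => ⟪x + t • v, y⟫) ⟪v, y⟫ t₀ := by
  simp only [inner_add_left, real_inner_smul_left]
  simpa using ((hasDerivAt_id t₀).mul_const ⟪v, y⟫).const_add ⟪x, y⟫

theorem hasLineDerivAt_inner_left (x v y : E) :
    HasLineDerivAt ℝ (fun θ : E => ⟪θ, y⟫) ⟪v, y⟫ x v :=
  hasDerivAt_inner_add_smul_left x v y 0

theorem hasLineDerivAt_log_sum_exp_inner {ι : Type*} [Fintype ι] (z : ι → E) (x v : E) :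
    HasLineDerivAt ℝ (fun θ : E => Real.log (∑ i, Real.exp ⟪θ, z i⟫))
      (∑ i, Real.exp ⟪x, z i⟫ / (∑ k, Real.exp ⟪x, z k⟫) * ⟪v, z i⟫) x v := by
  rcases isEmpty_or_nonempty ι with hι | hι
  · -- the function is the constant `Real.log 0`
    simpa [HasLineDerivAt] using hasDerivAt_const (0 : ℝ) (Real.log 0)
  have hS : ∑ k, Real.exp ⟪x, z k⟫ ≠ 0 :=
    (Finset.sum_pos (fun k _ => Real.exp_pos _) Finset.univ_nonempty).ne'
  have hsum : HasDerivAt (fun t : ℝ => ∑ i, Real.exp ⟪x + t • v, z i⟫)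
      (∑ i, Real.exp ⟪x, z i⟫ * ⟪v, z i⟫) 0 := by
    refine HasDerivAt.fun_sum fun i _ => ?_
    simpa using (hasDerivAt_inner_add_smul_left x v (z i) 0).exp
  unfold HasLineDerivAt
  refine (hsum.log (by simpa using hS)).congr_deriv ?_
  simp only [zero_smul, add_zero, Finset.sum_div]
  exact Finset.sum_congr rfl fun i _ => by ring

end InnerProductSpace

theorem EuclideanSpace.apply_add_smul_single_eq_of_notMem {ι F : Type*} [DecidableEq ι]
    {f : EuclideanSpace ℝ ι → F} {s : Set ι}
    (hf : ∀ θ θ' : EuclideanSpace ℝ ι, (∀ k, k ∈ s → θ k = θ' k) → f θ = f θ')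
    (θ : EuclideanSpace ℝ ι) {j : ι} (hj : j ∉ s) (t : ℝ) :
    f (θ + t • EuclideanSpace.single j 1) = f θ :=
  hf _ _ fun k hk => by
    have hkj : k ≠ j := by rintro rfl; exact hj hk
    simp [hkj]

theorem ceb_balances_error_free_coordinates_general
    (p1 p2 N : ℕ)
    (zstar : Fin N → EuclideanSpace ℝ (Fin (p1 + p2)))
    (zbarstar : EuclideanSpace ℝ (Fin (p1 + p2)))
    (h : EuclideanSpace ℝ (Fin (p1 + p2)) → ℝ)
    (hdep : ∀ θ θ' : EuclideanSpace ℝ (Fin (p1 + p2)),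
      (∀ j : Fin (p1 + p2), (j : ℕ) < p1 → θ j = θ' j) → h θ = h θ')
    (θc : EuclideanSpace ℝ (Fin (p1 + p2)))
    (hmin : IsLocalMin
      (fun θ : EuclideanSpace ℝ (Fin (p1 + p2)) =>
        Real.log (∑ i, Real.exp ⟪θ, zstar i⟫) - ⟪θ, zbarstar⟫ - h θ) θc)
    (w : Fin N → ℝ)
    (hw : ∀ i, w i = Real.exp ⟪θc, zstar i⟫ / ∑ j, Real.exp ⟪θc, zstar j⟫) :
    ∀ j : Fin (p1 + p2), p1 ≤ (j : ℕ) → ∑ i, w i * zstar i j = zbarstar j := by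
  intro j hj
  have hconst : ∀ t : ℝ, h (θc + t • EuclideanSpace.single j 1) = h θc :=
    EuclideanSpace.apply_add_smul_single_eq_of_notMem (s := {k : Fin (p1 + p2) | k < p1}) hdep θc
      (by simpa using hj)
  have hderiv := ((hasLineDerivAt_log_sum_exp_inner zstar θc (EuclideanSpace.single j 1)).sub
    (hasLineDerivAt_inner_left θc _ zbarstar)).sub
    (hasLineDerivAt_zero_of_forall_add_smul_eq hconst)
  simpa [EuclideanSpace.inner_single_left, ← hw, sub_eq_zero] using
    hmin.hasLineDerivAt_eq_zero hderiv

/-- If `θ̂_c` is a local minimum of the corrected entropy balancing objective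
`G(θ) = log (∑ i, exp ⟪θ, z*_i⟫) - ⟪θ, z̄*⟫ - h(θ)` where `h` is differentiable and depends
only on the first `p₁` coordinates, then the corrected EB weights exactly balance the last
`p₂` coordinates of the measurements. -/
theorem ceb_balances_error_free_coordinates
    (p1 p2 N : ℕ) (hp1 : 1 ≤ p1) (hp2 : 1 ≤ p2) (hN : 1 ≤ N)
    (zstar : Fin N → EuclideanSpace ℝ (Fin (p1 + p2)))
    (zbarstar : EuclideanSpace ℝ (Fin (p1 + p2)))
    (h : EuclideanSpace ℝ (Fin (p1 + p2)) → ℝ)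
    (hdiff : Differentiable ℝ h)
    (hdep : ∀ θ θ' : EuclideanSpace ℝ (Fin (p1 + p2)),
      (∀ j : Fin (p1 + p2), (j : ℕ) < p1 → θ j = θ' j) → h θ = h θ')
    (θc : EuclideanSpace ℝ (Fin (p1 + p2)))
    (hmin : IsLocalMin
      (fun θ : EuclideanSpace ℝ (Fin (p1 + p2)) =>
        Real.log (∑ i, Real.exp ⟪θ, zstar i⟫) - ⟪θ, zbarstar⟫ - h θ) θc)
    (w : Fin N → ℝ)
    (hw : ∀ i, w i = Real.exp ⟪θc, zstar i⟫ / ∑ j, Real.exp ⟪θc, zstar j⟫) :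
    ∀ j : Fin (p1 + p2), p1 ≤ (j : ℕ) → ∑ i, w i * zstar i j = zbarstar j :=
  ceb_balances_error_free_coordinates_general p1 p2 N zstar zbarstar h hdep θc hmin w hw
end

section
/- Let p = p_1 + p_2 with p_1, p_2 ≥ 1. Consider control units i = 1, …, N with true covariates z_i ∈ ℝ^p, each having m_i ≥ 2 replicated measurements z*_{i,j} ∈ ℝ^p (j = 1, …, m_i) whose last p_2 coordinates are error-free: z*_{i,j,k} = z_{i,k} for every k > p_1. Consider treated units l = 1, …, N_1 with true covariates y_l ∈ ℝ^p, each having m'_l ≥ 1 replicated measurements y*_{l,j} whose last p_2 coordinates satisfy y*_{l,j,k} = y_{l,k} for k > p_1. Define B_HW(θ) = [Σ_{i=1}^N (m_i(m_i−1))^{-1} Σ_{1 ≤ j ≠ k ≤ m_i} exp⟨θ, z*_{i,j}⟩ z*_{i,k}] / [Σ_{i=1}^N m_i^{-1} Σ_{j=1}^{m_i} exp⟨θ, z*_{i,j}⟩] − N_1^{-1} Σ_{l=1}^{N_1} (m'_l)^{-1} Σ_{j=1}^{m'_l} y*_{l,j}. If θ̂ ∈ ℝ^p satisfies B_HW(θ̂)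 = 0, then the weights ŵ_{c,i} = [m_i^{-1} Σ_{j=1}^{m_i} exp⟨θ̂, z*_{i,j}⟩] / [Σ_{i'=1}^N m_{i'}^{-1} Σ_{j=1}^{m_{i'}} exp⟨θ̂, z*_{i',j}⟩] satisfy, for every coordinate k > p_1: Σ_{i=1}^N ŵ_{c,i} z_{i,k} = N_1^{-1} Σ_{l=1}^{N_1} y_{l,k}. -/
/-!
In an error-free coordinate every replicate of a subject agrees with its true covariate, so
there the off-diagonal sum `∑_{j ≠ k} exp ⟪θ, z*_{i,j}⟫ z*_{i,k}` equals
`(m_i - 1) (∑_j exp ⟪θ, z*_{i,j}⟫) z_i`, and the Huang–Wang normalisation `(m_i (m_i - 1))⁻¹`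
turns the control part of `B_HW` into the weighted mean `∑ ŵ_i z_i`; likewise each treated
replicate mean reduces to `y_l`. The coordinate of `B_HW(θ̂) = 0` is then the balance identity.
-/

open scoped RealInnerProductSpace BigOperators

open Finset

theorem Finset.sum_ite_ne_const {ι M : Type*} [Fintype ι] [DecidableEq ι] [AddCommMonoid M]
    (j : ι) (c : M) :
    ∑ k, (if j ≠ k then c else 0) = (Fintype.card ι - 1) • c := by
  rw [← sum_filter, filter_ne, sum_const, card_erase_of_mem (mem_univ j), card_univ]

section Replicates

variable {𝕜 M : Type*} [Field 𝕜] [CharZero 𝕜] [AddCommGroup M] [Module 𝕜 M]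

theorem map_pairwise_replicate_mean {n : ℕ} (hn : 2 ≤ n) (φ : M →ₗ[𝕜] 𝕜) (e : Fin n → 𝕜)
    (x : Fin n → M) (c : 𝕜) (hx : ∀ j, φ (x j) = c) :
    φ (((n : 𝕜) * ((n : 𝕜) - 1))⁻¹ • ∑ j, ∑ k, if j ≠ k then e j • x k else 0)
      = (n : 𝕜)⁻¹ * (∑ j, e j) * c := by
  have hn0 : (n : 𝕜) ≠ 0 := Nat.cast_ne_zero.mpr (by omega)
  have hn1 : (n : 𝕜) - 1 ≠ 0 := by
    rw [sub_ne_zero]; exact_mod_cast (by omega : n ≠ 1)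
  have hrow : ∀ j, φ (∑ k, if j ≠ k then e j • x k else 0) = ((n : 𝕜) - 1) * (e j * c) := by
    intro j
    simp only [map_sum, apply_ite φ, map_smul, hx, smul_eq_mul, map_zero]
    rw [sum_ite_ne_const, Fintype.card_fin, nsmul_eq_mul, Nat.cast_pred (by omega)]
  rw [map_smul, map_sum, sum_congr rfl fun j _ => hrow j, ← mul_sum, ← sum_mul, smul_eq_mul]
  field_simp

theorem map_replicate_mean {n : ℕ} (hn : 1 ≤ n) (φ : M →ₗ[𝕜] 𝕜) (x : Fin n → M) (c : 𝕜)
    (hx : ∀ j, φ (x j) = c) :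
    φ ((n : 𝕜)⁻¹ • ∑ j, x j) = c := by
  have hn0 : (n : 𝕜) ≠ 0 := Nat.cast_ne_zero.mpr (by omega)
  simp only [map_smul, map_sum, hx, sum_const, card_univ, Fintype.card_fin, nsmul_eq_mul,
    smul_eq_mul]
  field_simp

end Replicates

theorem ceb_hw_balances_error_free_coordinates_general
    (p1 p2 N N1 : ℕ)
    (m : Fin N → ℕ) (hm : ∀ i, 2 ≤ m i)
    (m' : Fin N1 → ℕ) (hm' : ∀ l, 1 ≤ m' l)
    (z : Fin N → EuclideanSpace ℝ (Fin (p1 + p2)))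
    (zstar : (i : Fin N) → Fin (m i) → EuclideanSpace ℝ (Fin (p1 + p2)))
    (hz : ∀ i j (k : Fin (p1 + p2)), p1 ≤ (k : ℕ) → zstar i j k = z i k)
    (y : Fin N1 → EuclideanSpace ℝ (Fin (p1 + p2)))
    (ystar : (l : Fin N1) → Fin (m' l) → EuclideanSpace ℝ (Fin (p1 + p2)))
    (hy : ∀ l j (k : Fin (p1 + p2)), p1 ≤ (k : ℕ) → ystar l j k = y l k)
    (θhat : EuclideanSpace ℝ (Fin (p1 + p2)))
    (hroot :
      (∑ i, (m i : ℝ)⁻¹ * ∑ j, Real.exp ⟪θhat, zstar i j⟫)⁻¹ •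
          (∑ i, ((m i : ℝ) * ((m i : ℝ) - 1))⁻¹ •
            ∑ j, ∑ k, if j ≠ k then Real.exp ⟪θhat, zstar i j⟫ • zstar i k else 0)
        - (N1 : ℝ)⁻¹ • ∑ l, (m' l : ℝ)⁻¹ • ∑ j, ystar l j = 0)
    (w : Fin N → ℝ)
    (hw : ∀ i, w i = ((m i : ℝ)⁻¹ * ∑ j, Real.exp ⟪θhat, zstar i j⟫)
        / ∑ i', (m i' : ℝ)⁻¹ * ∑ j, Real.exp ⟪θhat, zstar i' j⟫) :
    ∀ k : Fin (p1 + p2), p1 ≤ (k : ℕ) →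
      ∑ i, w i * z i k = (N1 : ℝ)⁻¹ * ∑ l, y l k := by
  intro k hk
  let φ := EuclideanSpace.projₗ (𝕜 := ℝ) k
  have hroot_k := congrArg φ hroot
  rw [map_sub, map_smul, map_smul, map_sum, map_sum, map_zero,
    sum_congr rfl fun i _ => map_pairwise_replicate_mean (hm i) φ _ _ _ fun j => hz i j k hk,
    sum_congr rfl fun l _ => map_replicate_mean (hm' l) φ _ _ fun j => hy l j k hk,
    smul_eq_mul, smul_eq_mul, sub_eq_zero] at hroot_k
  rw [← hroot_k, mul_sum]
  refine sum_congr rfl fun i _ => ?_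
  rw [hw i, div_eq_inv_mul]
  ring

/-- CEB-HW part of Theorem 7: With replicated measurements whose last `p₂`
coordinates are error-free, if `θ̂` solves the Huang–Wang corrected estimating equation
`B_HW(θ̂) = 0`, then the CEB-HW weights exactly balance the true covariates in every
coordinate `k > p₁`: `∑ i, ŵ_{c,i} z_{i,k} = N₁⁻¹ ∑ l, y_{l,k}`. -/
theorem ceb_hw_balances_error_free_coordinates
    (p1 p2 N N1 : ℕ) (hp1 : 1 ≤ p1) (hp2 : 1 ≤ p2) (hN : 1 ≤ N) (hN1 : 1 ≤ N1)
    (m : Fin N → ℕ) (hm : ∀ i, 2 ≤ m i)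
    (m' : Fin N1 → ℕ) (hm' : ∀ l, 1 ≤ m' l)
    (z : Fin N → EuclideanSpace ℝ (Fin (p1 + p2)))
    (zstar : (i : Fin N) → Fin (m i) → EuclideanSpace ℝ (Fin (p1 + p2)))
    (hz : ∀ i j (k : Fin (p1 + p2)), p1 ≤ (k : ℕ) → zstar i j k = z i k)
    (y : Fin N1 → EuclideanSpace ℝ (Fin (p1 + p2)))
    (ystar : (l : Fin N1) → Fin (m' l) → EuclideanSpace ℝ (Fin (p1 + p2)))
    (hy : ∀ l j (k : Fin (p1 + p2)), p1 ≤ (k : ℕ) → ystar l j k = y l k)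
    (θhat : EuclideanSpace ℝ (Fin (p1 + p2)))
    (hroot :
      (∑ i, (m i : ℝ)⁻¹ * ∑ j, Real.exp ⟪θhat, zstar i j⟫)⁻¹ •
          (∑ i, ((m i : ℝ) * ((m i : ℝ) - 1))⁻¹ •
            ∑ j, ∑ k, if j ≠ k then Real.exp ⟪θhat, zstar i j⟫ • zstar i k else 0)
        - (N1 : ℝ)⁻¹ • ∑ l, (m' l : ℝ)⁻¹ • ∑ j, ystar l j = 0)
    (w : Fin N → ℝ)
    (hw : ∀ i, w i = ((m i : ℝ)⁻¹ * ∑ j, Real.exp ⟪θhat, zstar i j⟫)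
        / ∑ i', (m i' : ℝ)⁻¹ * ∑ j, Real.exp ⟪θhat, zstar i' j⟫) :
    ∀ k : Fin (p1 + p2), p1 ≤ (k : ℕ) →
      ∑ i, w i * z i k = (N1 : ℝ)⁻¹ * ∑ l, y l k :=
  ceb_hw_balances_error_free_coordinates_general p1 p2 N N1 m hm m' hm' z zstar hz y ystar hy θhat
    hroot w hw
end

section
/- Let (Ω, μ) be a probability space, let ε : Ω → ℝ^p be a random vector, fix θ, z ∈ ℝ^p and a real p×p matrix Σ. Assume exp⟨θ, ε⟩ and each coordinate ε_j·exp⟨θ, ε⟩ are integrable, and that E[exp⟨θ, ε⟩] = exp(⟨θ, Σθ⟩/2) and E[ε·exp⟨θ, ε⟩] = exp(⟨θ, Σθ⟩/2)·Σθ (as hold when ε is multivariate normal with mean zero and covariance Σ). Then E[(z + ε − Σθ)·exp(⟨θ, z + ε⟩ − ⟨θ, Σθ⟩/2)] = z·exp⟨θ, z⟩ (as an identity in ℝ^p, coordinatewise). -/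
open MeasureTheory Matrix

/-- Unbiasedness of the Huang–Wang corrected balancing function under a normal
error MGF: if `E[exp⟨θ,ε⟩] = exp(⟨θ,Σθ⟩/2)` and `E[ε exp⟨θ,ε⟩] = exp(⟨θ,Σθ⟩/2) Σθ`, then
`E[(z + ε - Σθ) exp(⟨θ, z + ε⟩ - ⟨θ,Σθ⟩/2)] = z exp⟨θ,z⟩` coordinatewise. -/
theorem huang_wang_corrected_balancing_unbiased
    {Ω : Type*} [MeasurableSpace Ω] (μ : Measure Ω) [IsProbabilityMeasure μ]
    (p : ℕ) (ε : Ω → (Fin p → ℝ)) (θ z : Fin p → ℝ)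
    (Sg : Matrix (Fin p) (Fin p) ℝ)
    (hint0 : Integrable (fun ω => Real.exp (θ ⬝ᵥ ε ω)) μ)
    (hint1 : ∀ j, Integrable (fun ω => ε ω j * Real.exp (θ ⬝ᵥ ε ω)) μ)
    (hmgf : ∫ ω, Real.exp (θ ⬝ᵥ ε ω) ∂μ = Real.exp ((θ ⬝ᵥ Sg.mulVec θ) / 2))
    (hgrad : ∀ j, ∫ ω, ε ω j * Real.exp (θ ⬝ᵥ ε ω) ∂μ
        = Real.exp ((θ ⬝ᵥ Sg.mulVec θ) / 2) * Sg.mulVec θ j) :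
    ∀ j, ∫ ω, (z j + ε ω j - Sg.mulVec θ j)
          * Real.exp (θ ⬝ᵥ (z + ε ω) - (θ ⬝ᵥ Sg.mulVec θ) / 2) ∂μ
        = z j * Real.exp (θ ⬝ᵥ z) := by
  intro j
  set c := (θ ⬝ᵥ Sg.mulVec θ) / 2 with hc
  have hsplit : ∀ ω, (z j + ε ω j - Sg.mulVec θ j)
      * Real.exp (θ ⬝ᵥ (z + ε ω) - c)
      = Real.exp (θ ⬝ᵥ z - c) * ((z j - Sg.mulVec θ j) * Real.exp (θ ⬝ᵥ ε ω)
        + ε ω j * Real.exp (θ ⬝ᵥ ε ω)) := by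
    intro ω
    rw [dotProduct_add, show θ ⬝ᵥ z + θ ⬝ᵥ ε ω - c = (θ ⬝ᵥ z - c) + θ ⬝ᵥ ε ω by ring,
      Real.exp_add]
    ring
  simp_rw [hsplit]
  rw [integral_const_mul, integral_add (hint0.const_mul _) (hint1 j),
    integral_const_mul, hmgf, hgrad j, Real.exp_sub]
  have := Real.exp_pos c
  field_simp
  ring
end

section
/- Let (Ω, 𝓕, μ) be a probability space, let Z : Ω → ℝ^p be a random vector, let T : Ω → ℝ be a random variable taking values in {0, 1}, and let θ_0 ∈ ℝ^p. Assume the logistic propensity score model: the conditional expectation of T given the σ-algebra generated by Z equals (1 + exp(−⟨θ_0, Z⟩))^{-1} almost surely. Assume further that exp⟨θ_0, Z⟩ and each coordinate Z_j·exp⟨θ_0, Z⟩ are integrable. Then E[(1 − T)·exp⟨θ_0, Z⟩] = E[T] and E[(1 − T)·exp⟨θ_0, Z⟩·Z] = E[T·Z] (coordinatewise); consequently, if E[T] > 0, then E[(1 − T)·exp⟨θ_0, Z⟩·Z] / E[(1 − T)·exp⟨θ_0, Z⟩] = E[T·Z]/E[T], i.e. the population exponentially tilted control covariate mean at θ_0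 equals the treated covariate mean. -/
open scoped RealInnerProductSpace
open MeasureTheory

lemma logistic_key (x : ℝ) :
    Real.exp x * (1 - (1 + Real.exp (-x))⁻¹) = (1 + Real.exp (-x))⁻¹ := by
  have h : 0 < 1 + Real.exp (-x) := by positivity
  have hx : Real.exp (-x) * Real.exp x = 1 := by
    rw [← Real.exp_add]; simp
  field_simp
  nlinarith [hx]

/-- Under the logistic propensity score model
`E[T | σ(Z)] = (1 + exp(-⟪θ0, Z⟫))⁻¹` a.s. for a binary treatment `T`,
`E[(1 - T) exp⟪θ0, Z⟫] = E[T]` and `E[(1 - T) exp⟪θ0, Z⟫ Z] = E[T Z]` coordinatewise;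
consequently, if `E[T] > 0`, the population exponentially tilted control covariate mean at
`θ0` equals the treated covariate mean. -/
theorem logistic_model_population_balance
    {Ω : Type*} [MeasurableSpace Ω] (μ : Measure Ω) [IsProbabilityMeasure μ]
    (p : ℕ) (Z : Ω → EuclideanSpace ℝ (Fin p)) (T : Ω → ℝ)
    (hZ : Measurable Z) (hT : Measurable T)
    (hTval : ∀ᵐ ω ∂μ, T ω = 0 ∨ T ω = 1)
    (θ0 : EuclideanSpace ℝ (Fin p))
    (hmodel : μ[T | MeasurableSpace.comap Z inferInstance]
        =ᵐ[μ] fun ω => (1 + Real.exp (-⟪θ0, Z ω⟫))⁻¹)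
    (hint1 : Integrable (fun ω => Real.exp ⟪θ0, Z ω⟫) μ)
    (hint2 : ∀ j, Integrable (fun ω => Z ω j * Real.exp ⟪θ0, Z ω⟫) μ) :
    (∫ ω, (1 - T ω) * Real.exp ⟪θ0, Z ω⟫ ∂μ = ∫ ω, T ω ∂μ) ∧
    (∀ j, ∫ ω, (1 - T ω) * Real.exp ⟪θ0, Z ω⟫ * Z ω j ∂μ = ∫ ω, T ω * Z ω j ∂μ) ∧
    ((0 < ∫ ω, T ω ∂μ) → ∀ j,
      (∫ ω, (1 - T ω) * Real.exp ⟪θ0, Z ω⟫ * Z ω j ∂μ)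
          / (∫ ω, (1 - T ω) * Real.exp ⟪θ0, Z ω⟫ ∂μ)
        = (∫ ω, T ω * Z ω j ∂μ) / (∫ ω, T ω ∂μ)) := by
  classical
  have hm : MeasurableSpace.comap Z inferInstance ≤ ‹MeasurableSpace Ω› := hZ.comap_le
  -- notation
  set e : Ω → ℝ := fun ω => Real.exp ⟪θ0, Z ω⟫ with he_def
  set π : Ω → ℝ := fun ω => (1 + Real.exp (-⟪θ0, Z ω⟫))⁻¹ with hπ_def
  have hπpos : ∀ ω, 0 < π ω := fun ω => by positivity
  have hπle1 : ∀ ω, π ω ≤ 1 := fun ω => by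
    rw [hπ_def]
    have h1 : (1:ℝ) ≤ 1 + Real.exp (-⟪θ0, Z ω⟫) :=
      le_add_of_nonneg_right (Real.exp_pos _).le
    exact inv_le_one_of_one_le₀ h1
  have hepos : ∀ ω, 0 < e ω := fun ω => Real.exp_pos _
  have hkey : ∀ ω, e ω * (1 - π ω) = π ω := fun ω => logistic_key _
  -- measurability
  have hZm : @Measurable Ω (EuclideanSpace ℝ (Fin p))
      (MeasurableSpace.comap Z inferInstance) _ Z := Measurable.of_comap_le le_rfl
  have hinnerM : Measurable fun z : EuclideanSpace ℝ (Fin p) => ⟪θ0, z⟫ :=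
    (continuous_const.inner continuous_id).measurable
  have hprojM : ∀ j, Measurable fun z : EuclideanSpace ℝ (Fin p) => z j := fun j =>
    (EuclideanSpace.proj (𝕜 := ℝ) j).continuous.measurable
  have heM : Measurable e := (Real.measurable_exp.comp hinnerM).comp hZ
  have hπM : Measurable π := by
    apply Measurable.inv
    exact measurable_const.add (Real.measurable_exp.comp ((hinnerM.comp hZ).neg))
  -- a.e. bounds on T
  have hT01 : ∀ᵐ ω ∂μ, 0 ≤ T ω ∧ T ω ≤ 1 := by
    filter_upwards [hTval] with ω h
    rcases h with h | h <;> simp [h]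
  have hTint : Integrable T μ := by
    refine (integrable_const (1:ℝ)).mono' hT.aestronglyMeasurable ?_
    filter_upwards [hT01] with ω hω
    rw [Real.norm_eq_abs, abs_of_nonneg hω.1]; exact hω.2
  -- Key lemma: for σ(Z)-measurable f with f*T integrable, ∫ f*T = ∫ f*π
  have lemA : ∀ f : Ω → ℝ,
      StronglyMeasurable[MeasurableSpace.comap Z inferInstance] f →
      Integrable (fun ω => f ω * T ω) μ →
      ∫ ω, f ω * T ω ∂μ = ∫ ω, f ω * π ω ∂μ := by
    intro f hf hfT
    have h1 : μ[f * T | MeasurableSpace.comap Z inferInstance]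
        =ᵐ[μ] f * μ[T | MeasurableSpace.comap Z inferInstance] :=
      condExp_mul_of_stronglyMeasurable_left hf hfT hTint
    have h2 : μ[f * T | MeasurableSpace.comap Z inferInstance]
        =ᵐ[μ] fun ω => f ω * π ω := by
      filter_upwards [h1, hmodel] with ω hω1 hω2
      rw [hω1]; simp only [Pi.mul_apply, hω2]
    calc ∫ ω, f ω * T ω ∂μ = ∫ ω, (f * T) ω ∂μ := rfl
      _ = ∫ ω, (μ[f * T | MeasurableSpace.comap Z inferInstance]) ω ∂μ :=
          (integral_condExp hm).symm
      _ = ∫ ω, f ω * π ω ∂μ := integral_congr_ae h2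
  -- ∫ T = ∫ π
  have eq0 : ∫ ω, T ω ∂μ = ∫ ω, π ω ∂μ := by
    rw [← integral_condExp hm (f := T)]
    exact integral_congr_ae hmodel
  -- σ(Z)-strong measurability helpers
  have hsm_e : StronglyMeasurable[MeasurableSpace.comap Z inferInstance] e :=
    ((Real.measurable_exp.comp hinnerM).comp hZm).stronglyMeasurable
  have hsm_Zj : ∀ j, StronglyMeasurable[MeasurableSpace.comap Z inferInstance]
      fun ω => Z ω j := fun j => ((hprojM j).comp hZm).stronglyMeasurable
  -- integrability facts
  have hint_eT : Integrable (fun ω => e ω * T ω) μ := by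
    refine hint1.mono' (heM.mul hT).aestronglyMeasurable ?_
    filter_upwards [hT01] with ω hω
    rw [Real.norm_eq_abs, abs_mul, abs_of_pos (hepos ω), abs_of_nonneg hω.1]
    nlinarith [hepos ω, hω.2]
  have hint_eπ : Integrable (fun ω => e ω * π ω) μ := by
    refine hint1.mono' (heM.mul hπM).aestronglyMeasurable
      (Filter.Eventually.of_forall fun ω => ?_)
    rw [Real.norm_eq_abs, abs_mul, abs_of_pos (hepos ω), abs_of_pos (hπpos ω)]
    nlinarith [hepos ω, hπpos ω, hπle1 ω]
  -- FIRST CLAIM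
  have claim1 : ∫ ω, (1 - T ω) * e ω ∂μ = ∫ ω, T ω ∂μ := by
    have h1 : ∫ ω, (1 - T ω) * e ω ∂μ = ∫ ω, (e ω - e ω * T ω) ∂μ :=
      integral_congr_ae (Filter.Eventually.of_forall fun ω => by ring)
    rw [h1, integral_sub hint1 hint_eT, lemA e hsm_e hint_eT,
      ← integral_sub hint1 hint_eπ, eq0]
    refine integral_congr_ae (Filter.Eventually.of_forall fun ω => ?_)
    linear_combination hkey ω
  -- SECOND CLAIM
  have claim2 : ∀ j, ∫ ω, (1 - T ω) * e ω * Z ω j ∂μ = ∫ ω, T ω * Z ω j ∂μ := by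
    intro j
    have hZjM : Measurable fun ω => Z ω j := (hprojM j).comp hZ
    have hint_eZ : Integrable (fun ω => e ω * Z ω j) μ :=
      (hint2 j).congr (Filter.Eventually.of_forall fun ω => mul_comm _ _)
    have habs : Integrable (fun ω => e ω * |Z ω j|) μ := by
      have h := hint_eZ.abs
      refine h.congr (Filter.Eventually.of_forall fun ω => ?_)
      show |e ω * Z ω j| = e ω * |Z ω j|
      rw [abs_mul, abs_of_pos (hepos ω)]
    -- truncation: integrability of T * Z_j
    have hg_sm : ∀ n : ℕ, StronglyMeasurable[MeasurableSpace.comap Z inferInstance]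
        fun ω => min |Z ω j| (n : ℝ) := by
      intro n
      have hzf : Measurable (fun z : EuclideanSpace ℝ (Fin p) => min |z j| (n : ℝ)) :=
        ((hprojM j).abs).min measurable_const
      exact (hzf.comp hZm).stronglyMeasurable
    have hg_nonneg : ∀ (n : ℕ) ω, 0 ≤ min |Z ω j| (n : ℝ) := fun n ω =>
      le_min (abs_nonneg _) (Nat.cast_nonneg _)
    have hTg_int : ∀ n : ℕ, Integrable (fun ω => min |Z ω j| (n : ℝ) * T ω) μ := by
      intro n
      refine (integrable_const ((n : ℝ))).mono'
        (((hZjM.abs).min measurable_const).mul hT).aestronglyMeasurable ?_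
      filter_upwards [hT01] with ω hω
      rw [Real.norm_eq_abs, abs_mul, abs_of_nonneg (hg_nonneg n ω), abs_of_nonneg hω.1]
      calc min |Z ω j| (n:ℝ) * T ω ≤ min |Z ω j| (n:ℝ) * 1 :=
            mul_le_mul_of_nonneg_left hω.2 (hg_nonneg n ω)
        _ ≤ (n:ℝ) := by rw [mul_one]; exact min_le_right _ _
    have hgπ_int : ∀ n : ℕ, Integrable (fun ω => min |Z ω j| (n : ℝ) * π ω) μ := by
      intro n
      refine (integrable_const ((n : ℝ))).mono'
        (((hZjM.abs).min measurable_const).mul hπM).aestronglyMeasurable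
        (Filter.Eventually.of_forall fun ω => ?_)
      rw [Real.norm_eq_abs, abs_mul, abs_of_nonneg (hg_nonneg n ω), abs_of_pos (hπpos ω)]
      calc min |Z ω j| (n:ℝ) * π ω ≤ min |Z ω j| (n:ℝ) * 1 :=
            mul_le_mul_of_nonneg_left (hπle1 ω) (hg_nonneg n ω)
        _ ≤ (n:ℝ) := by rw [mul_one]; exact min_le_right _ _
    have hπlee : ∀ ω, π ω ≤ e ω := fun ω => by
      have := hkey ω
      nlinarith [hπpos ω, hπle1 ω, hepos ω]
    have hbound : ∀ n : ℕ, ∫ ω, min |Z ω j| (n : ℝ) * T ω ∂μ ≤ ∫ ω, e ω * |Z ω j| ∂μ := by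
      intro n
      rw [lemA _ (hg_sm n) (hTg_int n)]
      refine integral_mono (hgπ_int n) habs fun ω => ?_
      calc min |Z ω j| (n:ℝ) * π ω ≤ |Z ω j| * e ω :=
            mul_le_mul (min_le_left _ _) (hπlee ω) (hπpos ω).le (abs_nonneg _)
        _ = e ω * |Z ω j| := mul_comm _ _
    have hTZ : Integrable (fun ω => T ω * Z ω j) μ := by
      refine ⟨(hT.mul hZjM).aestronglyMeasurable, ?_⟩
      rw [hasFiniteIntegral_iff_norm]
      set F : ℕ → Ω → ENNReal := fun n ω => ENNReal.ofReal (min |Z ω j| (n : ℝ) * T ω)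
        with hF_def
      have hFmeas : ∀ n, AEMeasurable (F n) μ := fun n =>
        (ENNReal.measurable_ofReal.comp
          (((hZjM.abs).min measurable_const).mul hT)).aemeasurable
      have hFmono : ∀ᵐ ω ∂μ, Monotone fun n => F n ω := by
        filter_upwards [hT01] with ω hω
        intro a b hab
        apply ENNReal.ofReal_le_ofReal
        exact mul_le_mul_of_nonneg_right
          (min_le_min le_rfl (Nat.cast_le.mpr hab)) hω.1
      have hsup : ∀ᵐ ω ∂μ, (⨆ n, F n ω) = ENNReal.ofReal ‖T ω * Z ω j‖ := by
        filter_upwards [hTval] with ω hω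
        rcases hω with h | h
        · simp [hF_def, h]
        · simp only [hF_def, h, mul_one, one_mul, Real.norm_eq_abs]
          refine le_antisymm (iSup_le fun n => ENNReal.ofReal_le_ofReal (min_le_left _ _)) ?_
          refine le_iSup_of_le ⌈|Z ω j|⌉₊ ?_
          rw [min_eq_left (Nat.le_ceil _)]
      have hlim : ∫⁻ ω, ENNReal.ofReal ‖T ω * Z ω j‖ ∂μ = ⨆ n, ∫⁻ ω, F n ω ∂μ := by
        rw [← lintegral_iSup' hFmeas hFmono]
        exact lintegral_congr_ae (hsup.mono fun ω hω => hω.symm)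
      have hFn : ∀ n, ∫⁻ ω, F n ω ∂μ = ENNReal.ofReal (∫ ω, min |Z ω j| (n : ℝ) * T ω ∂μ) := by
        intro n
        rw [ofReal_integral_eq_lintegral_ofReal (hTg_int n)]
        filter_upwards [hT01] with ω hω
        exact mul_nonneg (hg_nonneg n ω) hω.1
      rw [hlim]
      have : (⨆ n, ∫⁻ ω, F n ω ∂μ) ≤ ENNReal.ofReal (∫ ω, e ω * |Z ω j| ∂μ) := by
        refine iSup_le fun n => ?_
        rw [hFn n]
        exact ENNReal.ofReal_le_ofReal (hbound n)
      exact lt_of_le_of_lt this ENNReal.ofReal_lt_top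
    have hZT : Integrable (fun ω => Z ω j * T ω) μ := by
      refine hTZ.congr (Filter.Eventually.of_forall fun ω => ?_)
      exact mul_comm _ _
    have heZT : Integrable (fun ω => e ω * Z ω j * T ω) μ := by
      refine habs.mono' ((heM.mul hZjM).mul hT).aestronglyMeasurable ?_
      filter_upwards [hT01] with ω hω
      rw [Real.norm_eq_abs, abs_mul, abs_mul, abs_of_pos (hepos ω), abs_of_nonneg hω.1]
      calc e ω * |Z ω j| * T ω ≤ e ω * |Z ω j| * 1 :=
            mul_le_mul_of_nonneg_left hω.2 (by positivity)
        _ = e ω * |Z ω j| := mul_one _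
    have hint_eZπ : Integrable (fun ω => e ω * Z ω j * π ω) μ := by
      refine habs.mono' ((heM.mul hZjM).mul hπM).aestronglyMeasurable
        (Filter.Eventually.of_forall fun ω => ?_)
      rw [Real.norm_eq_abs, abs_mul, abs_mul, abs_of_pos (hepos ω), abs_of_pos (hπpos ω)]
      calc e ω * |Z ω j| * π ω ≤ e ω * |Z ω j| * 1 :=
            mul_le_mul_of_nonneg_left (hπle1 ω) (by positivity)
        _ = e ω * |Z ω j| := mul_one _
    have eq2 : ∫ ω, e ω * Z ω j * T ω ∂μ = ∫ ω, e ω * Z ω j * π ω ∂μ :=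
      lemA _ (hsm_e.mul (hsm_Zj j)) heZT
    have eq3 : ∫ ω, Z ω j * T ω ∂μ = ∫ ω, Z ω j * π ω ∂μ :=
      lemA _ (hsm_Zj j) hZT
    have hint_Zπ : Integrable (fun ω => Z ω j * π ω) μ := by
      refine habs.mono' (hZjM.mul hπM).aestronglyMeasurable
        (Filter.Eventually.of_forall fun ω => ?_)
      rw [Real.norm_eq_abs, abs_mul, abs_of_pos (hπpos ω)]
      calc |Z ω j| * π ω ≤ |Z ω j| * e ω :=
            mul_le_mul_of_nonneg_left (hπlee ω) (abs_nonneg _)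
        _ = e ω * |Z ω j| := mul_comm _ _
    have h1 : ∫ ω, (1 - T ω) * e ω * Z ω j ∂μ
        = ∫ ω, (e ω * Z ω j - e ω * Z ω j * T ω) ∂μ :=
      integral_congr_ae (Filter.Eventually.of_forall fun ω => by ring)
    rw [h1, integral_sub hint_eZ heZT, eq2, ← integral_sub hint_eZ hint_eZπ]
    have h2 : ∫ ω, (e ω * Z ω j - e ω * Z ω j * π ω) ∂μ = ∫ ω, Z ω j * π ω ∂μ :=
      integral_congr_ae (Filter.Eventually.of_forall fun ω => by
        linear_combination Z ω j * hkey ω)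
    rw [h2, ← eq3]
    exact integral_congr_ae (Filter.Eventually.of_forall fun ω => mul_comm _ _)
  refine ⟨claim1, claim2, fun _ j => by rw [claim1, claim2 j]⟩
end
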